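/- arXiv:1709.10203 — 8 statements merged into one kernel-verified Lean document; each statement's English description precedes it below -/
import Mathlib

section
/- Let a : ℤ → ℂ satisfy a_k = 0 for all k ≤ −1, and suppose there exist constants C > 0, D ≥ 0 and ρ ∈ (0,1) with |a_0| ≤ D and |a_k| ≤ C·ρ^{k−1} for all k ≥ 1. Let θ₀ ∈ [−π,π] satisfy |a(e^{iθ₀})| = ‖a‖∞. Then for every θ ∈ [−π,π], ‖a‖∞² − |a(e^{iθ})|² ≤ ((D·C·(1−ρ²) + C²·ρ)/(1−ρ)⁴) · (θ − θ₀)². -/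
open scoped Real

/-- The `n × n` Toeplitz matrix of a sequence `a : ℤ → ℂ`, with `(j,k)` entry `a (j - k)`. -/
noncomputable def toeplitz (a : ℤ → ℂ) (n : ℕ) : Matrix (Fin n) (Fin n) ℂ :=
  fun j k => a ((j : ℤ) - (k : ℤ))

/-- The operator norm of the `n × n` Toeplitz matrix of `a`, as a linear map on
Euclidean space `ℂ^n`. -/
noncomputable def toeplitzNorm (a : ℤ → ℂ) (n : ℕ) : ℝ :=
  ‖Matrix.toEuclideanCLM (𝕜 := ℂ) (toeplitz a n)‖

/-- The symbol `a(e^{iθ}) = ∑_{k ∈ ℤ} a_k e^{ikθ}` of a sequence `a : ℤ → ℂ`. -/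
noncomputable def symbol (a : ℤ → ℂ) (θ : ℝ) : ℂ :=
  ∑' k : ℤ, a k * Complex.exp (Complex.I * k * θ)

/-- `‖a‖_∞ = sup_{θ ∈ [-π, π]} |a(e^{iθ})|`. -/
noncomputable def symbolSup (a : ℤ → ℂ) : ℝ :=
  sSup ((fun θ => ‖symbol a θ‖) '' Set.Icc (-π) π)

/-!
Write `f θ = ‖a(e^{iθ})‖² = ∑_{j,k} a_j conj(a_k) e^{i(j-k)θ}`. Since
`|e^{iμ(x+h)} + e^{iμ(x-h)} - 2e^{iμx}| ≤ μ²h²`, the second differences of `f` satisfy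
`|f(x+h) + f(x-h) - 2f(x)| ≤ h² ∑_{j,k} b_j b_k (j-k)²` for any majorant `|a_k| ≤ b_k`, and the double
sum equals `2(S₀S₂ - S₁²)` with `S_m = ∑ k^m b_k`. For `b₀ = D`, `b_k = Cρ^{k-1}` this is twice the
constant `c` of the theorem. Finally `f` is `2π`-periodic, so `θ₀` is a global maximum, and a lower
bound `-2ch²` on second differences at a global maximum gives `f(θ₀) - f(θ₀+h) ≤ ch²`: the defect
`u h = f(θ₀) - f(θ₀+h) - ch²` satisfies `u h ≤ 2u(h/2)` and `u h ≤ ch²`, so `u h ≤ ch²/2ⁿ` for all `n`.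
-/

noncomputable def geomMajorant (C D ρ : ℝ) : ℕ → ℝ
  | 0 => D
  | n + 1 => C * ρ ^ n

lemma hasSum_geomMajorant_mul_pow {C D ρ s : ℝ} (m : ℕ)
    (hs : HasSum (fun n : ℕ => ((n : ℝ) + 1) ^ m * ρ ^ n) s) :
    HasSum (fun n => geomMajorant C D ρ n * (n : ℝ) ^ m) (D * 0 ^ m + C * s) := by
  rw [← hasSum_nat_add_iff' 1]
  simpa [geomMajorant, mul_comm, mul_assoc] using hs.mul_left C

lemma hasSum_succ_mul_geometric {ρ : ℝ} (hρ : |ρ| < 1) :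
    HasSum (fun n : ℕ => ((n : ℝ) + 1) * ρ ^ n) (1 / (1 - ρ) ^ 2) := by
  simpa [add_comm] using hasSum_choose_mul_geometric_of_norm_lt_one 1 (r := ρ) hρ

lemma hasSum_succ_sq_mul_geometric {ρ : ℝ} (hρ : |ρ| < 1) :
    HasSum (fun n : ℕ => ((n : ℝ) + 1) ^ 2 * ρ ^ n) ((1 + ρ) / (1 - ρ) ^ 3) := by
  have h1ρ : 1 - ρ ≠ 0 := by linarith [(abs_lt.mp hρ).2]
  have h2 := (hasSum_choose_mul_geometric_of_norm_lt_one 2 (r := ρ) hρ).mul_left 2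
  have hterm : (fun n : ℕ => ((n : ℝ) + 1) ^ 2 * ρ ^ n)
      = fun n => 2 * (((n + 2 : ℕ).choose 2 : ℝ) * ρ ^ n) - ((n : ℝ) + 1) * ρ ^ n := by
    funext n
    rw [Nat.cast_choose_two]
    push_cast
    ring
  rw [hterm, show (1 + ρ) / (1 - ρ) ^ 3 = 2 * (1 / (1 - ρ) ^ (2 + 1)) - 1 / (1 - ρ) ^ 2 by
    field_simp; ring]
  exact h2.sub (hasSum_succ_mul_geometric hρ)

open Complex in
noncomputable def trigSeries {ι : Type*} (c : ι → ℂ) (ω : ι → ℝ) (θ : ℝ) : ℂ :=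
  ∑' i, c i * exp (↑(ω i * θ) * I)

section TrigSeries

open Complex ComplexConjugate

variable {ι : Type*} {c : ι → ℂ} {ω b : ι → ℝ}

lemma norm_exp_second_diff_le (μ x h : ℝ) :
    ‖exp (↑(μ * (x + h)) * I) + exp (↑(μ * (x - h)) * I) - 2 * exp (↑(μ * x) * I)‖
      ≤ μ ^ 2 * h ^ 2 := by
  set E := exp (↑(μ * x) * I)
  set s := exp (I * ↑(μ * h))
  set s' := exp (I * ↑(-(μ * h)))
  have hplus : exp (↑(μ * (x + h)) * I) = E * s := by
    rw [← exp_add]; congr 1; push_cast; ring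
  have hminus : exp (↑(μ * (x - h)) * I) = E * s' := by
    rw [← exp_add]; congr 1; push_cast; ring
  have hss' : s * s' = 1 := by
    rw [← exp_add, ← exp_zero]; congr 1; push_cast; ring
  have hE : ‖E‖ = 1 := norm_exp_ofReal_mul_I _
  calc ‖exp (↑(μ * (x + h)) * I) + exp (↑(μ * (x - h)) * I) - 2 * exp (↑(μ * x) * I)‖
      = ‖E‖ * (‖s - 1‖ * ‖s' - 1‖) := by
        rw [hplus, hminus, ← norm_mul, ← norm_mul, ← norm_neg]
        congr 1
        linear_combination (-E) * hss'
    _ ≤ 1 * (‖μ * h‖ * ‖-(μ * h)‖) := by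
        rw [hE]
        gcongr
        · exact Real.norm_exp_I_mul_ofReal_sub_one_le
        · exact Real.norm_exp_I_mul_ofReal_sub_one_le
    _ = μ ^ 2 * h ^ 2 := by
        rw [norm_neg, Real.norm_eq_abs, ← sq, sq_abs]; ring

lemma norm_trigSeries_le {S : ℝ} (hc : ∀ i, ‖c i‖ ≤ b i) (hb : HasSum b S) (θ : ℝ) :
    ‖trigSeries c ω θ‖ ≤ S :=
  tsum_of_norm_bounded hb fun i => by
    rw [norm_mul, norm_exp_ofReal_mul_I, mul_one]; exact hc i

lemma hasSum_trigSeries_mul_conj (hc : Summable fun i => ‖c i‖) (θ : ℝ) :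
    HasSum (fun p : ι × ι => c p.1 * conj (c p.2) * exp (↑((ω p.1 - ω p.2) * θ) * I))
      ((‖trigSeries c ω θ‖ : ℂ) ^ 2) := by
  set t : ι → ℂ := fun i => c i * exp (↑(ω i * θ) * I)
  have hnorm : ∀ i, ‖t i‖ = ‖c i‖ := fun i => by
    simp only [t, norm_mul, norm_exp_ofReal_mul_I, mul_one]
  have htn : Summable fun i => ‖t i‖ := by simpa only [hnorm] using hc
  have ht : HasSum t (trigSeries c ω θ) := htn.of_norm.hasSum
  have htn' : Summable fun i => ‖conj (t i)‖ := by simpa only [norm_conj] using htn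
  have hconj : HasSum (fun i => conj (t i)) (conj (trigSeries c ω θ)) :=
    Complex.hasSum_conj'.mpr ht
  have hs : Summable fun p : ι × ι => t p.1 * conj (t p.2) :=
    summable_mul_of_summable_norm (f := t) (g := fun i => conj (t i)) htn htn'
  have hprod : HasSum (fun p : ι × ι => t p.1 * conj (t p.2))
      (trigSeries c ω θ * conj (trigSeries c ω θ)) :=
    HasSum.mul (f := t) (g := fun i => conj (t i)) ht hconj hs
  rw [mul_conj'] at hprod
  refine hprod.congr_fun fun p => ?_
  simp only [t, map_mul, ← exp_conj]
  rw [mul_mul_mul_comm, ← exp_add]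
  congr 2
  simp only [conj_ofReal, conj_I]
  push_cast
  ring

lemma hasSum_mul_mul_sub_sq {S₀ S₁ S₂ : ℝ} (h₀ : HasSum b S₀)
    (h₁ : HasSum (fun i => b i * ω i) S₁) (h₂ : HasSum (fun i => b i * ω i ^ 2) S₂) :
    HasSum (fun p : ι × ι => b p.1 * b p.2 * (ω p.1 - ω p.2) ^ 2) (2 * (S₀ * S₂ - S₁ ^ 2)) := by
  have hprod : ∀ {f g : ι → ℝ} {s t : ℝ}, HasSum f s → HasSum g t →
      HasSum (fun p : ι × ι => f p.1 * g p.2) (s * t) := fun hf hg =>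
    hf.mul hg (summable_mul_of_summable_norm hf.summable.abs hg.summable.abs)
  rw [show 2 * (S₀ * S₂ - S₁ ^ 2) = S₀ * S₂ + S₂ * S₀ - 2 * (S₁ * S₁) by ring]
  exact ((hprod h₀ h₂).add (hprod h₂ h₀)).sub ((hprod h₁ h₁).mul_left 2) |>.congr_fun
    fun p => by ring

lemma abs_second_diff_norm_sq_trigSeries_le {T : ℝ} (hc : ∀ i, ‖c i‖ ≤ b i) (hb : Summable b)
    (hT : HasSum (fun p : ι × ι => b p.1 * b p.2 * (ω p.1 - ω p.2) ^ 2) T) (x h : ℝ) :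
    |‖trigSeries c ω (x + h)‖ ^ 2 + ‖trigSeries c ω (x - h)‖ ^ 2 - 2 * ‖trigSeries c ω x‖ ^ 2|
      ≤ T * h ^ 2 := by
  have hcn : Summable fun i => ‖c i‖ := hb.of_nonneg_of_le (fun i => norm_nonneg _) hc
  have hS := hasSum_trigSeries_mul_conj (ω := ω) hcn
  have hsum := ((hS (x + h)).add (hS (x - h))).sub ((hS x).mul_left 2)
  refine (Complex.norm_real _).symm.trans_le ?_
  push_cast
  refine hsum.norm_le_of_bounded (hT.mul_right (h ^ 2)) fun p => ?_
  set μ := ω p.1 - ω p.2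
  calc _ = ‖c p.1‖ * ‖c p.2‖ * ‖exp (↑(μ * (x + h)) * I) + exp (↑(μ * (x - h)) * I)
          - 2 * exp (↑(μ * x) * I)‖ := by
        rw [← norm_conj (c p.2), ← norm_mul, ← norm_mul]
        congr 1
        ring
    _ ≤ b p.1 * b p.2 * (μ ^ 2 * h ^ 2) := by
        have hb0 : ∀ i, 0 ≤ b i := fun i => (norm_nonneg _).trans (hc i)
        exact mul_le_mul (mul_le_mul (hc _) (hc _) (norm_nonneg _) (hb0 _))
          (norm_exp_second_diff_le μ x h) (norm_nonneg _) (mul_nonneg (hb0 _) (hb0 _))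
    _ = _ := by ring

end TrigSeries

lemma sub_le_mul_sq_of_forall_le_of_second_diff_ge {f : ℝ → ℝ} {x₀ c : ℝ}
    (hmax : ∀ x, f x ≤ f x₀) (hsd : ∀ x h, -(2 * c * h ^ 2) ≤ f (x + h) + f (x - h) - 2 * f x)
    (h : ℝ) : f x₀ - f (x₀ + h) ≤ c * h ^ 2 := by
  set u : ℝ → ℝ := fun h => f x₀ - f (x₀ + h) - c * h ^ 2
  have hbase : ∀ h, u h ≤ c * h ^ 2 := fun h => by
    have := hsd x₀ h
    have := hmax (x₀ - h)
    simp only [u]; linarith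
  have hhalve : ∀ h, u h ≤ 2 * u (h / 2) := fun h => by
    have := hsd (x₀ + h / 2) (h / 2)
    rw [add_assoc, add_halves, add_sub_cancel_right] at this
    simp only [u]; linarith
  have hiter : ∀ n : ℕ, ∀ h, u h ≤ c * h ^ 2 * 2⁻¹ ^ n := by
    intro n
    induction n with
    | zero => simpa using hbase
    | succ n ih =>
      intro h
      calc u h ≤ 2 * u (h / 2) := hhalve h
        _ ≤ 2 * (c * (h / 2) ^ 2 * 2⁻¹ ^ n) := by gcongr; exact ih _
        _ = c * h ^ 2 * 2⁻¹ ^ (n + 1) := by ring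
  have hlim : Filter.Tendsto (fun n : ℕ => c * h ^ 2 * 2⁻¹ ^ n) Filter.atTop (nhds 0) := by
    simpa using (tendsto_pow_atTop_nhds_zero_of_lt_one (r := (2 : ℝ)⁻¹) (by norm_num)
      (by norm_num)).const_mul (c * h ^ 2)
  have := ge_of_tendsto' hlim fun n => hiter n h
  simp only [u] at this; linarith

section Symbol

variable {a : ℤ → ℂ}

lemma norm_le_geomMajorant {C D ρ : ℝ} (ha0 : ‖a 0‖ ≤ D)
    (hdecay : ∀ k : ℕ, 1 ≤ k → ‖a k‖ ≤ C * ρ ^ (k - 1)) :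
    ∀ n : ℕ, ‖a n‖ ≤ geomMajorant C D ρ n
  | 0 => ha0
  | n + 1 => hdecay (n + 1) n.succ_pos

lemma symbol_eq_trigSeries (hcausal : ∀ k : ℤ, k ≤ -1 → a k = 0) :
    symbol a = trigSeries (fun n : ℕ => a n) (fun n => n) := by
  funext θ
  rw [symbol, trigSeries, ← Nat.cast_injective.tsum_eq]
  · congr 1
    funext n
    push_cast
    ring_nf
  · intro k hk
    refine ⟨k.toNat, Int.toNat_of_nonneg (not_lt.mp fun hneg => hk ?_)⟩
    simp [hcausal k (by omega)]

lemma symbol_periodic (a : ℤ → ℂ) : Function.Periodic (symbol a) (2 * π) := fun θ => by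
  simp only [symbol]
  congr 1
  funext k
  rw [show Complex.I * k * ((θ + 2 * π : ℝ) : ℂ) = Complex.I * k * θ + k * (2 * π * Complex.I) by
    push_cast; ring, Complex.exp_add, Complex.exp_int_mul_two_pi_mul_I, mul_one]

lemma norm_symbol_le_symbolSup {M : ℝ} (hM : ∀ θ, ‖symbol a θ‖ ≤ M) (θ : ℝ) :
    ‖symbol a θ‖ ≤ symbolSup a := by
  have hper : Function.Periodic (fun θ => ‖symbol a θ‖) (2 * π) := (symbol_periodic a).comp _
  have hrange := hper.image_Icc Real.two_pi_pos (-π)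
  rw [show -π + 2 * π = π by ring] at hrange
  rw [symbolSup, hrange]
  exact le_csSup ⟨M, Set.forall_mem_range.mpr hM⟩ ⟨θ, rfl⟩

end Symbol

theorem stmt2_general (a : ℤ → ℂ) (C D ρ θ₀ : ℝ)
    (hcausal : ∀ k : ℤ, k ≤ -1 → a k = 0)
    (hρ : ρ ∈ Set.Ioo (0 : ℝ) 1)
    (ha0 : ‖a 0‖ ≤ D)
    (hdecay : ∀ k : ℕ, 1 ≤ k → ‖a k‖ ≤ C * ρ ^ (k - 1))
    (hmax : ‖symbol a θ₀‖ = symbolSup a) :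
    ∀ θ ∈ Set.Icc (-π) π,
      symbolSup a ^ 2 - ‖symbol a θ‖ ^ 2 ≤
        (D * C * (1 - ρ ^ 2) + C ^ 2 * ρ) / (1 - ρ) ^ 4 * (θ - θ₀) ^ 2 := by
  intro θ _
  have hρ' : |ρ| < 1 := abs_lt.mpr ⟨by linarith [hρ.1], hρ.2⟩
  have h1ρ : 1 - ρ ≠ 0 := by linarith [hρ.2]
  have hc := norm_le_geomMajorant ha0 hdecay
  have h₀ := hasSum_geomMajorant_mul_pow (C := C) (D := D) 0
    (by simpa using hasSum_geometric_of_abs_lt_one hρ')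
  have h₁ := hasSum_geomMajorant_mul_pow (C := C) (D := D) 1
    (by simpa using hasSum_succ_mul_geometric hρ')
  have h₂ := hasSum_geomMajorant_mul_pow (C := C) (D := D) 2 (hasSum_succ_sq_mul_geometric hρ')
  simp only [pow_zero, pow_one, mul_one] at h₀ h₁
  have hT := hasSum_mul_mul_sub_sq h₀ h₁ h₂
  set F := trigSeries (fun n : ℕ => a n) (fun n => (n : ℝ))
  have hsymb : symbol a = F := symbol_eq_trigSeries hcausal
  have hglobal : ∀ x, ‖F x‖ ^ 2 ≤ ‖F θ₀‖ ^ 2 := fun x => by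
    gcongr
    rw [← hsymb, hmax]
    exact norm_symbol_le_symbolSup (fun y => by rw [hsymb]; exact norm_trigSeries_le hc h₀ y) x
  have hsd := fun x h => neg_le_of_abs_le
    (abs_second_diff_norm_sq_trigSeries_le hc h₀.summable hT x h)
  have := sub_le_mul_sq_of_forall_le_of_second_diff_ge hglobal
    (by simpa [mul_assoc] using hsd) (θ - θ₀)
  rw [← hmax, hsymb]
  convert this using 2
  · rw [add_sub_cancel]
  · field_simp
    ring

theorem stmt2 (a : ℤ → ℂ) (C D ρ θ₀ : ℝ)
    (hcausal : ∀ k : ℤ, k ≤ -1 → a k = 0)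
    (hρ : ρ ∈ Set.Ioo (0 : ℝ) 1) (hC : 0 < C) (hD : 0 ≤ D)
    (ha0 : ‖a 0‖ ≤ D)
    (hdecay : ∀ k : ℕ, 1 ≤ k → ‖a k‖ ≤ C * ρ ^ (k - 1))
    (hθ₀ : θ₀ ∈ Set.Icc (-π) π)
    (hmax : ‖symbol a θ₀‖ = symbolSup a) :
    ∀ θ ∈ Set.Icc (-π) π,
      symbolSup a ^ 2 - ‖symbol a θ‖ ^ 2 ≤
        (D * C * (1 - ρ ^ 2) + C ^ 2 * ρ) / (1 - ρ) ^ 4 * (θ - θ₀) ^ 2 :=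
  stmt2_general a C D ρ θ₀ hcausal hρ ha0 hdecay hmax
end

section
/- Let a, b : ℤ → ℂ be absolutely summable, and define c : ℤ → ℂ by c_m := ∑_{k∈ℤ} a_{m−k} b_k (the Fourier coefficients of the product of the symbols of a and b). Then for every n ≥ 1 and all integers 0 ≤ i, j ≤ n−1, ∑_{k=0}^{n−1} a_{i−k} b_{k−j} = c_{i−j} − ∑_{q=0}^∞ a_{i+q+1} · b_{−(j+q+1)} − ∑_{q=0}^∞ a_{i−n−q} · b_{n−j+q}. (This is the entrywise form of Widom's identity T_n(a)T_n(b) = T_n(ab) − P_n H(a)H(b̃) P_n − W_n H(ã)H(b) W_n.) -/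
/-!
With `f k = a (i - k) * b (k - j)`, the full series `∑_{k ∈ ℤ} f k` is `c (i - j)`. The Toeplitz
entry is its part over `0 ≤ k < n`; the tail `k < 0` is the `H(a) H(b̃)` term and the tail
`k ≥ n` is the `H(ã) H(b)` term.
-/

open Finset

theorem Summable.sum_range_eq_tsum_sub_tsum_neg_sub_tsum_nat_add {G : Type*} [AddCommGroup G]
    [UniformSpace G] [IsUniformAddGroup G] [CompleteSpace G] [T2Space G] {f : ℤ → G}
    (hf : Summable f) (n : ℕ) :
    ∑ k ∈ range n, f k = ∑' k : ℤ, f k - ∑' q : ℕ, f (-(q + 1)) - ∑' q : ℕ, f (n + q) := by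
  obtain ⟨hnat, hneg⟩ := summable_int_iff_summable_nat_and_neg_add_zero.1 hf
  rw [tsum_of_nat_of_neg_add_one hnat hneg, ← hnat.sum_add_tsum_nat_add n]
  simp only [Nat.cast_add, add_comm (n : ℤ)]
  abel

theorem summable_norm_mul_of_summable_norm_of_norm_le {R ι : Type*} [NormedRing R] {u v : ι → R}
    {C : ℝ} (hu : Summable fun k => ‖u k‖) (hv : ∀ k, ‖v k‖ ≤ C) :
    Summable fun k => ‖u k * v k‖ :=
  (hu.mul_right C).of_nonneg_of_le (fun _ => norm_nonneg _) fun k =>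
    (norm_mul_le _ _).trans (mul_le_mul_of_nonneg_left (hv k) (norm_nonneg _))

theorem summable_mul_comp_sub_comp_sub {R : Type*} [NormedRing R] [CompleteSpace R] {a b : ℤ → R}
    (ha : Summable fun k => ‖a k‖) (hb : Summable fun k => ‖b k‖) (i j : ℤ) :
    Summable fun k => a (i - k) * b (k - j) := by
  refine Summable.of_norm (summable_norm_mul_of_summable_norm_of_norm_le (C := ∑' k, ‖b k‖) ?_
    fun k => hb.le_tsum (k - j) fun _ _ => norm_nonneg _)
  exact (Equiv.subLeft i).summable_iff.2 ha

theorem tsum_mul_comp_sub_comp_sub {R : Type*} [AddCommMonoid R] [Mul R] [TopologicalSpace R]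
    (a b : ℤ → R) (i j : ℤ) : ∑' k, a (i - k) * b (k - j) = ∑' k, a (i - j - k) * b k := by
  rw [← (Equiv.addRight j).tsum_eq]
  simp only [Equiv.coe_addRight, add_sub_cancel_right, sub_add_eq_sub_sub_swap]

theorem stmt5 (a b : ℤ → ℂ)
    (ha : Summable fun k : ℤ => ‖a k‖)
    (hb : Summable fun k : ℤ => ‖b k‖)
    (c : ℤ → ℂ) (hc : ∀ m : ℤ, c m = ∑' k : ℤ, a (m - k) * b k) :
    ∀ n : ℕ, 1 ≤ n → ∀ i j : ℕ, i ≤ n - 1 → j ≤ n - 1 →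
      (∑ k ∈ Finset.range n, a ((i : ℤ) - (k : ℤ)) * b ((k : ℤ) - (j : ℤ))) =
        c ((i : ℤ) - (j : ℤ)) -
          (∑' q : ℕ, a ((i : ℤ) + (q : ℤ) + 1) * b (-((j : ℤ) + (q : ℤ) + 1))) -
          (∑' q : ℕ, a ((i : ℤ) - (n : ℤ) - (q : ℤ)) * b ((n : ℤ) - (j : ℤ) + (q : ℤ))) := by
  intro n _ i j _ _
  rw [(summable_mul_comp_sub_comp_sub ha hb i j).sum_range_eq_tsum_sub_tsum_neg_sub_tsum_nat_add n,
    tsum_mul_comp_sub_comp_sub, ← hc]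
  congr 3 <;> ext q <;> ring_nf
end

section
/- Let a : ℤ → ℂ be absolutely summable with a_k = 0 for all k ≤ −1, and define c : ℤ → ℂ by c_m := ∑_{k∈ℤ} a_k · conj(a_{k−m}) (the Fourier coefficients of |a(e^{iθ})|²). Then for every n ≥ 1 and all integers 0 ≤ i, j ≤ n−1, ∑_{k=0}^{n−1} a_{i−k} · conj(a_{j−k}) = c_{i−j} − ∑_{q=0}^∞ a_{i+1+q} · conj(a_{j+1+q}). (This is the entrywise form of the identity T_n(a) T_n(a)* = T_n(|a|²) − P_n H(a) H(conj(a)~) P_n for causal a.) -/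
/-!
Put `F t = a t * conj (a (t - (i - j)))`. Reflecting `k ↦ i - k`, the left-hand side is the
window `∑_{t=0}^{i} F t` (the terms with `k > i` vanish by causality), `c (i - j) = ∑_{t ≥ 0} F t`
again by causality, and the difference is the tail `∑_{t > i} F t`.
-/
open Finset

theorem Summable.mul_of_norm_le {ι R : Type*} [NormedRing R] [CompleteSpace R] {a b : ι → R}
    (ha : Summable (‖a ·‖)) {C : ℝ} (hb : ∀ i, ‖b i‖ ≤ C) : Summable fun i => a i * b i :=
  .of_norm_bounded (ha.mul_right C) fun i =>
    (norm_mul_le _ _).trans (mul_le_mul_of_nonneg_left (hb i) (norm_nonneg _))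

section Causal

variable {M : Type*} [AddCommGroup M] {F : ℤ → M}

theorem support_subset_range_natCast_of_eq_zero_of_neg (hF : ∀ t < 0, F t = 0) :
    Function.support F ⊆ Set.range ((↑) : ℕ → ℤ) := fun t ht => by
  lift t to ℕ using not_lt.1 fun h => ht (hF t h)
  exact ⟨t, rfl⟩

theorem sum_range_comp_sub_of_eq_zero_of_neg (hF : ∀ t < 0, F t = 0) {i n : ℕ} (hin : i < n) :
    ∑ k ∈ range n, F (i - k) = ∑ t ∈ range (i + 1), F t := by
  rw [← sum_subset (range_subset_range.2 hin), ← sum_range_reflect]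
  · refine sum_congr rfl fun k hk => ?_
    rw [mem_range] at hk
    congr 1
    omega
  · intro k _ hk
    exact hF _ (by simp only [mem_range] at hk; omega)

theorem sum_range_comp_sub_eq_tsum_sub_tsum [TopologicalSpace M] [IsTopologicalAddGroup M]
    [T2Space M] (hF : ∀ t < 0, F t = 0) (hs : Summable F) {i n : ℕ} (hin : i < n) :
    ∑ k ∈ range n, F (i - k) = ∑' t, F t - ∑' q : ℕ, F (i + 1 + q) := by
  have hsupp := support_subset_range_natCast_of_eq_zero_of_neg hF
  have hs' : Summable fun t : ℕ => F t :=
    (Nat.cast_injective.summable_iff (Function.support_subset_iff'.1 hsupp)).2 hs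
  rw [sum_range_comp_sub_of_eq_zero_of_neg hF hin, ← Nat.cast_injective.tsum_eq hsupp,
    ← hs'.sum_add_tsum_nat_add (i + 1)]
  have htail : ∑' q : ℕ, F ↑(q + (i + 1)) = ∑' q : ℕ, F (i + 1 + q) :=
    tsum_congr fun q => by push_cast; ring_nf
  rw [htail, add_sub_cancel_right]

end Causal

theorem stmt6 (a : ℤ → ℂ)
    (ha : Summable fun k : ℤ => ‖a k‖)
    (hcausal : ∀ k : ℤ, k ≤ -1 → a k = 0)
    (c : ℤ → ℂ) (hc : ∀ m : ℤ, c m = ∑' k : ℤ, a k * (starRingEnd ℂ) (a (k - m))) :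
    ∀ n : ℕ, 1 ≤ n → ∀ i j : ℕ, i ≤ n - 1 → j ≤ n - 1 →
      (∑ k ∈ Finset.range n, a ((i : ℤ) - (k : ℤ)) * (starRingEnd ℂ) (a ((j : ℤ) - (k : ℤ)))) =
        c ((i : ℤ) - (j : ℤ)) -
          ∑' q : ℕ, a ((i : ℤ) + 1 + (q : ℤ)) * (starRingEnd ℂ) (a ((j : ℤ) + 1 + (q : ℤ))) := by
  intro n hn i j hi _
  set F : ℤ → ℂ := fun t => a t * starRingEnd ℂ (a (t - (i - j)))
  have hF : ∀ t < 0, F t = 0 := fun t ht => by simp [F, hcausal t (by omega)]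
  have hFs : Summable F := ha.mul_of_norm_le (C := ∑' k, ‖a k‖) fun t => by
    simpa using ha.le_tsum (t - (i - j)) fun _ _ => norm_nonneg _
  have key := sum_range_comp_sub_eq_tsum_sub_tsum hF hFs (show i < n by omega)
  have hwindow (k : ℕ) : F (i - k) = a (i - k) * starRingEnd ℂ (a (j - k)) := by
    simp only [F, sub_sub_sub_cancel_left]
  have htail (q : ℕ) : F (i + 1 + q) = a (i + 1 + q) * starRingEnd ℂ (a (j + 1 + q)) := by
    simp only [F]
    ring_nf
  simp only [← hwindow, ← htail, hc]
  exact key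
end

section
/- For all positive integers m and t, ∫_{−π}^{π} |∑_{k=0}^{m} e^{ikθ}|^{2t} dθ ≥ (16/(9π)) · (1/√t) · (m+1)^{2t−1}. -/
open scoped Real

/-!
Near `θ = 0` every term `e^{ikθ}` has real part `cos kθ ≥ 1 - m²θ²/2`, so
`|∑ e^{ikθ}|^{2t} ≥ (m+1)^{2t} (1 - m²θ²/2)^{2t} ≥ (m+1)^{2t} (1 - t m²θ²)` by Bernoulli's
inequality. Integrating this parabola over `|θ| ≤ 1/((m+1)√t)` already gives
`(4/3) (m+1)^{2t-1} / √t`, and `16/(9π) < 4/3`.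
-/

open Finset

lemma re_sum_exp_I_mul (m : ℕ) (θ : ℝ) :
    (∑ k ∈ range (m + 1), Complex.exp (Complex.I * k * θ)).re =
      ∑ k ∈ range (m + 1), Real.cos (k * θ) := by
  rw [Complex.re_sum]
  refine sum_congr rfl fun k _ => ?_
  rw [show Complex.I * k * θ = ((k * θ : ℝ) : ℂ) * Complex.I by push_cast; ring]
  exact Complex.exp_ofReal_mul_I_re _

lemma mul_one_sub_le_sum_cos (m : ℕ) (θ : ℝ) :
    (m + 1) * (1 - m ^ 2 * θ ^ 2 / 2) ≤ ∑ k ∈ range (m + 1), Real.cos (k * θ) := by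
  have hterm : ∀ k ∈ range (m + 1), 1 - m ^ 2 * θ ^ 2 / 2 ≤ Real.cos (k * θ) := by
    intro k hk
    have hkm : (k : ℝ) ≤ m := by exact_mod_cast Nat.le_of_lt_succ (mem_range.mp hk)
    have hk2 : (k : ℝ) ^ 2 * θ ^ 2 ≤ m ^ 2 * θ ^ 2 := by gcongr
    linarith [Real.one_sub_sq_div_two_le_cos (x := k * θ), mul_pow (k : ℝ) θ 2]
  calc (m + 1) * (1 - m ^ 2 * θ ^ 2 / 2)
      = ∑ _k ∈ range (m + 1), (1 - m ^ 2 * θ ^ 2 / 2 : ℝ) := by simp [mul_sub]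
    _ ≤ _ := sum_le_sum hterm

lemma pow_mul_one_sub_le_norm_sum_exp_pow (m n : ℕ) {θ : ℝ} (hθ : m ^ 2 * θ ^ 2 ≤ 2) :
    (m + 1) ^ n * (1 - n * (m ^ 2 * θ ^ 2 / 2)) ≤
      ‖∑ k ∈ range (m + 1), Complex.exp (Complex.I * k * θ)‖ ^ n := by
  have hbase : 0 ≤ (m + 1) * (1 - m ^ 2 * θ ^ 2 / 2 : ℝ) := by
    have : 0 ≤ 1 - m ^ 2 * θ ^ 2 / 2 := by linarith
    positivity
  have hnorm : (m + 1) * (1 - m ^ 2 * θ ^ 2 / 2 : ℝ) ≤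
      ‖∑ k ∈ range (m + 1), Complex.exp (Complex.I * k * θ)‖ := by
    calc _ ≤ ∑ k ∈ range (m + 1), Real.cos (k * θ) := mul_one_sub_le_sum_cos m θ
      _ = (∑ k ∈ range (m + 1), Complex.exp (Complex.I * k * θ)).re :=
          (re_sum_exp_I_mul m θ).symm
      _ ≤ _ := Complex.re_le_norm _
  have hbernoulli : 1 - n * (m ^ 2 * θ ^ 2 / 2) ≤ (1 - m ^ 2 * θ ^ 2 / 2 : ℝ) ^ n := by
    simpa [sub_eq_add_neg] using
      one_add_mul_le_pow (a := -(m ^ 2 * θ ^ 2 / 2 : ℝ)) (by nlinarith) n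
  calc (m + 1) ^ n * (1 - n * (m ^ 2 * θ ^ 2 / 2))
      ≤ (m + 1) ^ n * (1 - m ^ 2 * θ ^ 2 / 2 : ℝ) ^ n := by gcongr
    _ = ((m + 1) * (1 - m ^ 2 * θ ^ 2 / 2 : ℝ)) ^ n := (mul_pow _ _ _).symm
    _ ≤ _ := pow_le_pow_left₀ hbase hnorm n

lemma four_thirds_mul_le_integral_one_sub_mul_sq {c a : ℝ} (ha : 0 ≤ a) (hca : c * a ^ 2 ≤ 1) :
    4 / 3 * a ≤ ∫ θ in (-a)..a, (1 - c * θ ^ 2) := by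
  have hsq : IntervalIntegrable (fun θ : ℝ => c * θ ^ 2) MeasureTheory.volume (-a) a :=
    (by fun_prop : Continuous fun θ : ℝ => c * θ ^ 2).intervalIntegrable _ _
  rw [intervalIntegral.integral_sub intervalIntegrable_const hsq,
    intervalIntegral.integral_const, intervalIntegral.integral_const_mul, integral_pow]
  simp only [smul_eq_mul]
  nlinarith [mul_le_mul_of_nonneg_left hca ha]

lemma pow_mul_four_thirds_le_integral_norm_sum_exp_pow (m t : ℕ) {a : ℝ} (ha : 0 ≤ a)
    (haπ : a ≤ π) (hma : m ^ 2 * a ^ 2 ≤ 2) (hta : t * m ^ 2 * a ^ 2 ≤ 1) :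
    (m + 1) ^ (2 * t) * (4 / 3 * a) ≤
      ∫ θ in (-π)..π, ‖∑ k ∈ range (m + 1), Complex.exp (Complex.I * k * θ)‖ ^ (2 * t) := by
  set f : ℝ → ℝ := fun θ =>
    ‖∑ k ∈ range (m + 1), Complex.exp (Complex.I * k * θ)‖ ^ (2 * t)
  have hf : Continuous f := by fun_prop
  have hpoint : ∀ θ ∈ Set.Icc (-a) a, (m + 1) ^ (2 * t) * (1 - t * m ^ 2 * θ ^ 2) ≤ f θ := by
    intro θ hθ
    have hmθ : (m : ℝ) ^ 2 * θ ^ 2 ≤ 2 :=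
      le_trans (mul_le_mul_of_nonneg_left (sq_le_sq' hθ.1 hθ.2) (by positivity)) hma
    convert pow_mul_one_sub_le_norm_sum_exp_pow m (2 * t) hmθ using 3
    push_cast
    ring
  calc (m + 1) ^ (2 * t) * (4 / 3 * a)
      ≤ (m + 1) ^ (2 * t) * ∫ θ in (-a)..a, (1 - t * m ^ 2 * θ ^ 2) := by
        gcongr; exact four_thirds_mul_le_integral_one_sub_mul_sq ha hta
    _ = ∫ θ in (-a)..a, (m + 1) ^ (2 * t) * (1 - t * m ^ 2 * θ ^ 2) :=
        (intervalIntegral.integral_const_mul _ _).symm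
    _ ≤ ∫ θ in (-a)..a, f θ :=
        intervalIntegral.integral_mono_on (by linarith)
          ((by fun_prop : Continuous _).intervalIntegrable _ _) (hf.intervalIntegrable _ _) hpoint
    _ ≤ ∫ θ in (-π)..π, f θ :=
        intervalIntegral.integral_mono_interval (by linarith) (by linarith) haπ
          (.of_forall fun θ => by positivity) (hf.intervalIntegrable _ _)

theorem stmt8_general (m t : ℕ) (ht : 1 ≤ t) :
    (∫ θ in (-π)..π,
        ‖∑ k ∈ Finset.range (m + 1), Complex.exp (Complex.I * k * θ)‖ ^ (2 * t)) ≥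
      16 / (9 * π) * (1 / Real.sqrt t) * (m + 1 : ℝ) ^ (2 * t - 1) := by
  set a : ℝ := 1 / ((m + 1) * √t)
  have ht1 : (1 : ℝ) ≤ t := by exact_mod_cast ht
  have hs : 1 ≤ √t := Real.one_le_sqrt.mpr ht1
  have ha1 : a ≤ 1 := by rw [div_le_one (by positivity)]; nlinarith
  have hta : t * m ^ 2 * a ^ 2 ≤ 1 := by
    calc (t * m ^ 2) * a ^ 2 ≤ t * (m + 1) ^ 2 * a ^ 2 := by gcongr; linarith
      _ = 1 := by rw [div_pow, mul_pow, Real.sq_sqrt (by positivity)]; field_simp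
  have hma : m ^ 2 * a ^ 2 ≤ 2 := by nlinarith [sq_nonneg ((m : ℝ) * a)]
  have h16 : 16 / (9 * π) ≤ 4 / 3 := by
    rw [div_le_div_iff₀ (by positivity) (by norm_num)]; nlinarith [Real.pi_gt_three]
  calc 16 / (9 * π) * (1 / √t) * (m + 1 : ℝ) ^ (2 * t - 1)
      ≤ 4 / 3 * (1 / √t) * (m + 1 : ℝ) ^ (2 * t - 1) := by gcongr
    _ = (m + 1) ^ (2 * t) * (4 / 3 * a) := by
      rw [← Nat.sub_add_cancel (by omega : 1 ≤ 2 * t), pow_succ, Nat.add_sub_cancel]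
      simp only [a]
      field_simp
    _ ≤ _ := pow_mul_four_thirds_le_integral_norm_sum_exp_pow m t (by positivity)
      (by linarith [Real.pi_gt_three]) hma hta

theorem stmt8 (m t : ℕ) (hm : 1 ≤ m) (ht : 1 ≤ t) :
    (∫ θ in (-π)..π,
        ‖∑ k ∈ Finset.range (m + 1), Complex.exp (Complex.I * k * θ)‖ ^ (2 * t)) ≥
      16 / (9 * π) * (1 / Real.sqrt t) * (m + 1 : ℝ) ^ (2 * t - 1) :=
  stmt8_general m t ht
end

section
/- For every integer m ≥ 0, (1/2π) ∫_{−π}^{π} θ² · |∑_{k=0}^{m} e^{ikθ}|⁴ dθ ≤ ((2 + 3π⁴)/(3π)) · (m+1). -/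
/-!
Write `S(θ) = ∑_{k<n} e^{ikθ}`. Trivially `‖S‖ ≤ n`, and summing the geometric series together
with Jordan's inequality `|sin x| ≥ 2|x|/π` gives `‖S(θ)‖ ≤ 2 / |e^{iθ} - 1| ≤ π / |θ|` on
`[-π, π]`. Split the integral at `±1/n`: the inner part is at most `n⁴ ∫_{-1/n}^{1/n} θ² = 2n/3`,
and on each outer part `θ² ‖S‖⁴ ≤ π⁴ / θ²` integrates to at most `π⁴ n`.
-/

open scoped Real
open Complex Finset intervalIntegral

theorem two_div_pi_mul_abs_le_norm_exp_I_mul_sub_one {θ : ℝ} (hθ : |θ| ≤ π) :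
    2 / π * |θ| ≤ ‖exp (I * θ) - 1‖ := by
  have h := Real.mul_abs_le_abs_sin (x := θ / 2) (by rw [abs_div, abs_two]; linarith [Real.pi_pos])
  rw [norm_exp_I_mul_ofReal_sub_one, norm_mul, Real.norm_eq_abs, Real.norm_eq_abs, abs_two]
  rw [abs_div, abs_two] at h
  linarith

theorem norm_sum_exp_I_mul_le (n : ℕ) (θ : ℝ) : ‖∑ k ∈ range n, exp (I * k * θ)‖ ≤ n := by
  refine (norm_sum_le _ _).trans ?_
  simp [Complex.norm_exp]

theorem norm_sum_exp_I_mul_le_pi_div (n : ℕ) {θ : ℝ} (h0 : θ ≠ 0) (hθ : |θ| ≤ π) :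
    ‖∑ k ∈ range n, exp (I * k * θ)‖ ≤ π / |θ| := by
  set x := exp (I * θ)
  have hx : ‖x‖ = 1 := norm_exp_I_mul_ofReal θ
  have hlow : 2 / π * |θ| ≤ ‖x - 1‖ := two_div_pi_mul_abs_le_norm_exp_I_mul_sub_one hθ
  have hpos : 0 < 2 / π * |θ| := by positivity
  have hx1 : x ≠ 1 := fun h => by simp [h] at hlow; linarith
  have hgeom : ∑ k ∈ range n, exp (I * k * θ) = (x ^ n - 1) / (x - 1) := by
    rw [← geom_sum_eq hx1]
    refine sum_congr rfl fun k _ => ?_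
    rw [← exp_nat_mul]; ring_nf
  have hnum : ‖x ^ n - 1‖ ≤ 2 := by
    simpa [hx, one_add_one_eq_two] using norm_sub_le (x ^ n) 1
  calc ‖∑ k ∈ range n, exp (I * k * θ)‖ = ‖x ^ n - 1‖ / ‖x - 1‖ := by rw [hgeom, norm_div]
    _ ≤ 2 / (2 / π * |θ|) := div_le_div₀ zero_le_two hnum hpos hlow
    _ = π / |θ| := by field_simp

theorem integral_le_mul_inv_sub_inv {f : ℝ → ℝ} {u v C : ℝ} (huv : u ≤ v)
    (h0 : (0 : ℝ) ∉ Set.Icc u v) (hf : IntervalIntegrable f MeasureTheory.volume u v)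
    (hb : ∀ θ ∈ Set.Icc u v, f θ ≤ C / θ ^ 2) : ∫ θ in u..v, f θ ≤ C * (u⁻¹ - v⁻¹) := by
  have h0' : (0 : ℝ) ∉ Set.uIcc u v := by rwa [Set.uIcc_of_le huv]
  have hpow : ∀ θ : ℝ, C / θ ^ 2 = C * θ ^ (-2 : ℤ) := fun θ => by
    rw [zpow_neg, div_eq_mul_inv]; norm_cast
  simp_rw [hpow] at hb
  calc ∫ θ in u..v, f θ ≤ ∫ θ in u..v, C * θ ^ (-2 : ℤ) :=
        integral_mono_on huv hf ((intervalIntegrable_zpow (Or.inr h0')).const_mul _) hb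
    _ = C * (u⁻¹ - v⁻¹) := by
        rw [integral_const_mul, integral_zpow (Or.inr ⟨by norm_num, h0'⟩)]
        congr 1
        norm_num
        ring

theorem sq_mul_norm_sum_exp_I_mul_pow_four_le_pi_pow_four_div (n : ℕ) {θ : ℝ} (h0 : θ ≠ 0)
    (hθ : |θ| ≤ π) : θ ^ 2 * ‖∑ k ∈ range n, exp (I * k * θ)‖ ^ 4 ≤ π ^ 4 / θ ^ 2 := by
  have hpos : 0 < |θ| := abs_pos.mpr h0
  calc θ ^ 2 * ‖∑ k ∈ range n, exp (I * k * θ)‖ ^ 4 ≤ |θ| ^ 2 * (π / |θ|) ^ 4 := by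
        rw [sq_abs]; gcongr; exact norm_sum_exp_I_mul_le_pi_div n h0 hθ
    _ = π ^ 4 / θ ^ 2 := by rw [← sq_abs θ]; field_simp

theorem integral_sq_mul_norm_sum_exp_I_mul_pow_four_le {n : ℕ} (hn : 0 < n) :
    ∫ θ in (-π)..π, θ ^ 2 * ‖∑ k ∈ range n, exp (I * k * θ)‖ ^ 4 ≤ (2 / 3 + 2 * π ^ 4) * n := by
  set f : ℝ → ℝ := fun θ => θ ^ 2 * ‖∑ k ∈ range n, exp (I * k * θ)‖ ^ 4
  have hf : ∀ u v, IntervalIntegrable f MeasureTheory.volume u v := fun u v =>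
    (by fun_prop : Continuous f).intervalIntegrable u v
  have hn1 : (1 : ℝ) ≤ n := by exact_mod_cast hn
  have hn0 : (n : ℝ) ≠ 0 := by positivity
  set a : ℝ := (n : ℝ)⁻¹
  have ha0 : 0 < a := by positivity
  have haπ : a < π := (inv_le_one_of_one_le₀ hn1).trans_lt (by linarith [Real.pi_gt_three])
  have hmid : ∫ θ in (-a)..a, f θ ≤ 2 / 3 * n := by
    calc ∫ θ in (-a)..a, f θ ≤ ∫ θ in (-a)..a, (n : ℝ) ^ 4 * θ ^ 2 := by
          refine integral_mono_on (by linarith) (hf _ _)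
            ((continuous_const.mul (continuous_pow 2)).intervalIntegrable _ _) fun θ _ => ?_
          simp only [f]
          rw [mul_comm ((n : ℝ) ^ 4)]
          gcongr
          exact norm_sum_exp_I_mul_le n θ
      _ = 2 / 3 * n := by
          rw [integral_const_mul, integral_pow]
          have hna : (n : ℝ) * a = 1 := mul_inv_cancel₀ hn0
          linear_combination 2 * n / 3 * ((n * a) ^ 2 + n * a + 1) * hna
  have hleft : ∫ θ in (-π)..(-a), f θ ≤ π ^ 4 * ((-π)⁻¹ - (-a)⁻¹) := by
    refine integral_le_mul_inv_sub_inv (by linarith) (fun h => by linarith [h.2]) (hf _ _)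
      fun θ hθ => sq_mul_norm_sum_exp_I_mul_pow_four_le_pi_pow_four_div n (by linarith [hθ.2])
        (abs_le.mpr ⟨hθ.1, by linarith [hθ.2]⟩)
  have hright : ∫ θ in a..π, f θ ≤ π ^ 4 * (a⁻¹ - π⁻¹) := by
    refine integral_le_mul_inv_sub_inv haπ.le (fun h => by linarith [h.1]) (hf _ _)
      fun θ hθ => sq_mul_norm_sum_exp_I_mul_pow_four_le_pi_pow_four_div n (by linarith [hθ.1])
        (abs_le.mpr ⟨by linarith [hθ.1], hθ.2⟩)
  rw [← integral_add_adjacent_intervals (hf _ (-a)) (hf _ _),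
    ← integral_add_adjacent_intervals (hf (-a) a) (hf _ _)]
  have hπ : 0 ≤ π ^ 4 * π⁻¹ := by positivity
  simp only [inv_neg, a, inv_inv] at hleft hright
  linarith

theorem stmt9 (m : ℕ) :
    (1 / (2 * π)) *
        ∫ θ in (-π)..π,
          θ ^ 2 * ‖∑ k ∈ Finset.range (m + 1), Complex.exp (Complex.I * k * θ)‖ ^ 4 ≤
      (2 + 3 * π ^ 4) / (3 * π) * (m + 1 : ℝ) := by
  have h := integral_sq_mul_norm_sum_exp_I_mul_pow_four_le (n := m + 1) m.succ_pos
  push_cast at h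
  calc (1 / (2 * π)) * ∫ θ in (-π)..π,
          θ ^ 2 * ‖∑ k ∈ Finset.range (m + 1), Complex.exp (Complex.I * k * θ)‖ ^ 4
      ≤ (1 / (2 * π)) * ((2 / 3 + 2 * π ^ 4) * (m + 1)) := by gcongr
    _ = (1 + 3 * π ^ 4) / (3 * π) * (m + 1 : ℝ) := by field_simp
    _ ≤ (2 + 3 * π ^ 4) / (3 * π) * (m + 1 : ℝ) := by gcongr; norm_num
end

section
/- Let a : ℤ → ℂ be absolutely summable. Then for every n ≥ 1, ‖T_n(a)‖ ≤ ‖a‖∞. -/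
/-!
Put `g_x(θ) = ∑_k x_k e^{ikθ}`. Orthogonality of the exponentials on `[-π, π]` gives
`2π ⟪y, T_n(a) x⟫ = ∫ a(e^{iθ}) conj (g_y θ) g_x θ dθ` (the series for the symbol can be integrated
termwise since `a` is absolutely summable) and Parseval's identity `∫ |g_x|² = 2π ‖x‖²`.
Bounding the symbol by `‖a‖∞` and `|g_y| |g_x|` by `(|g_y|² + |g_x|²) / 2` yields
`2 |⟪y, T_n(a) x⟫| ≤ ‖a‖∞ (‖y‖² + ‖x‖²)`, which for unit vectors is the norm bound.
-/

open scoped Real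

open Complex MeasureTheory

lemma Matrix.inner_toEuclideanCLM_eq_sum {𝕜 ι : Type*} [RCLike 𝕜] [Fintype ι] [DecidableEq ι]
    (A : Matrix ι ι 𝕜) (x y : EuclideanSpace 𝕜 ι) :
    inner 𝕜 y (Matrix.toEuclideanCLM (𝕜 := 𝕜) A x)
      = ∑ j, ∑ k, starRingEnd 𝕜 (y j) * A j k * x k := by
  simp only [PiLp.inner_apply, Matrix.ofLp_toEuclideanCLM, Matrix.mulVec, dotProduct,
    RCLike.inner_apply, Finset.sum_mul]
  exact Finset.sum_congr rfl fun j _ => Finset.sum_congr rfl fun k _ => by ring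

namespace Toeplitz

lemma norm_exp_I_mul_int_mul (k : ℤ) (θ : ℝ) : ‖exp (I * k * θ)‖ = 1 := by
  rw [show I * k * θ = ((k * θ : ℝ) : ℂ) * I by push_cast; ring]
  exact norm_exp_ofReal_mul_I _

lemma integral_exp_I_mul_int_mul (m : ℤ) :
    ∫ θ in -π..π, exp (I * m * θ) = if m = 0 then (2 * π : ℂ) else 0 := by
  rcases eq_or_ne m 0 with rfl | hm
  · simp only [Int.cast_zero, mul_zero, zero_mul, exp_zero, intervalIntegral.integral_const,
      sub_neg_eq_add, real_smul, ofReal_add, mul_one, if_true]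
    ring
  have hIm : I * m ≠ 0 := by simp [hm]
  have hperiodic : exp (I * m * π) = exp (I * m * (-π : ℝ)) := by
    rw [show I * m * (π : ℂ) = I * m * ((-π : ℝ) : ℂ) + m * (2 * π * I) by push_cast; ring,
      exp_add, exp_int_mul_two_pi_mul_I, mul_one]
  rw [if_neg hm, integral_exp_mul_complex hIm, hperiodic, sub_self, zero_div]

variable {n : ℕ}

noncomputable def trigPoly (y : EuclideanSpace ℂ (Fin n)) (θ : ℝ) : ℂ :=
  ∑ k : Fin n, y k * exp (I * (k : ℤ) * θ)

lemma continuous_trigPoly (y : EuclideanSpace ℂ (Fin n)) : Continuous (trigPoly y) := by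
  unfold trigPoly
  fun_prop

lemma conj_trigPoly_mul_trigPoly (x y : EuclideanSpace ℂ (Fin n)) (θ : ℝ) :
    starRingEnd ℂ (trigPoly y θ) * trigPoly x θ
      = ∑ j, ∑ k, starRingEnd ℂ (y j) * x k * exp (I * ((k : ℤ) - j : ℤ) * θ) := by
  simp only [trigPoly, map_sum, map_mul, ← exp_conj, Finset.sum_mul_sum]
  refine Finset.sum_congr rfl fun j _ => Finset.sum_congr rfl fun k _ => ?_
  rw [mul_mul_mul_comm, ← exp_add]
  congr 2
  simp only [conj_I, conj_ofReal, map_intCast]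
  push_cast
  ring

lemma integral_exp_mul_conj_trigPoly_mul_trigPoly (m : ℤ) (x y : EuclideanSpace ℂ (Fin n)) :
    ∫ θ in -π..π, exp (I * m * θ) * (starRingEnd ℂ (trigPoly y θ) * trigPoly x θ)
      = 2 * π * ∑ j : Fin n, ∑ k : Fin n,
          if (j : ℤ) - k = m then starRingEnd ℂ (y j) * x k else 0 := by
  have hterm : ∀ j k : Fin n, ∫ θ in -π..π,
      exp (I * m * θ) * (starRingEnd ℂ (y j) * x k * exp (I * ((k : ℤ) - j : ℤ) * θ))
        = 2 * π * if (j : ℤ) - k = m then starRingEnd ℂ (y j) * x k else 0 := by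
    intro j k
    have hexp : ∀ θ : ℝ, exp (I * m * θ) * exp (I * ((k : ℤ) - j : ℤ) * θ)
        = exp (I * (m + k - j : ℤ) * θ) := fun θ => by
      rw [← exp_add]
      congr 1
      push_cast
      ring
    simp_rw [mul_left_comm (exp _), hexp, intervalIntegral.integral_const_mul,
      integral_exp_I_mul_int_mul]
    have hcond : m + k - j = 0 ↔ (j : ℤ) - k = m := by omega
    simp only [hcond, mul_ite, mul_zero]
    split_ifs <;> ring1
  simp_rw [conj_trigPoly_mul_trigPoly, Finset.mul_sum]
  rw [intervalIntegral.integral_finsetSum fun j _ => ?_]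
  · refine Finset.sum_congr rfl fun j _ => ?_
    rw [intervalIntegral.integral_finsetSum fun k _ => ?_]
    · exact Finset.sum_congr rfl fun k _ => hterm j k
    exact Continuous.intervalIntegrable (by fun_prop) _ _
  exact Continuous.intervalIntegrable (by fun_prop) _ _

lemma integral_norm_trigPoly_sq (y : EuclideanSpace ℂ (Fin n)) :
    ∫ θ in -π..π, ‖trigPoly y θ‖ ^ 2 = 2 * π * ‖y‖ ^ 2 := by
  have h := integral_exp_mul_conj_trigPoly_mul_trigPoly 0 y y
  simp only [Int.cast_zero, mul_zero, zero_mul, exp_zero, one_mul, sub_eq_zero, Nat.cast_inj,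
    Fin.val_inj, Finset.sum_ite_eq, Finset.mem_univ, if_true, conj_mul'] at h
  apply ofReal_injective
  rw [← intervalIntegral.integral_ofReal]
  push_cast
  rw [h, ← ofReal_pow, EuclideanSpace.norm_sq_eq]
  push_cast
  rfl

lemma integral_norm_trigPoly_mul_norm_trigPoly_le (x y : EuclideanSpace ℂ (Fin n)) :
    ∫ θ in -π..π, ‖trigPoly y θ‖ * ‖trigPoly x θ‖ ≤ π * (‖y‖ ^ 2 + ‖x‖ ^ 2) := by
  have hgx := continuous_trigPoly x
  have hgy := continuous_trigPoly y
  have hint : ∀ f : ℝ → ℝ, Continuous f → IntervalIntegrable f volume (-π) π :=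
    fun f hf => hf.intervalIntegrable _ _
  calc ∫ θ in -π..π, ‖trigPoly y θ‖ * ‖trigPoly x θ‖
      ≤ ∫ θ in -π..π, (‖trigPoly y θ‖ ^ 2 + ‖trigPoly x θ‖ ^ 2) / 2 := by
        refine intervalIntegral.integral_mono_on (by linarith [Real.pi_pos])
          (hint _ (by fun_prop)) (hint _ (by fun_prop)) fun θ _ => ?_
        nlinarith [sq_nonneg (‖trigPoly y θ‖ - ‖trigPoly x θ‖)]
    _ = π * (‖y‖ ^ 2 + ‖x‖ ^ 2) := by
        rw [intervalIntegral.integral_div,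
          intervalIntegral.integral_add (hint _ (by fun_prop)) (hint _ (by fun_prop)),
          integral_norm_trigPoly_sq, integral_norm_trigPoly_sq]
        ring

section Symbol

variable {a : ℤ → ℂ}

lemma summable_symbol_terms (ha : Summable fun k => ‖a k‖) (θ : ℝ) :
    Summable fun k : ℤ => a k * exp (I * k * θ) :=
  .of_norm <| by simpa only [norm_mul, norm_exp_I_mul_int_mul, mul_one] using ha

lemma norm_symbol_le_symbolSup (ha : Summable fun k => ‖a k‖) {θ : ℝ}
    (hθ : θ ∈ Set.Icc (-π) π) : ‖symbol a θ‖ ≤ symbolSup a := by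
  refine le_csSup ⟨∑' k, ‖a k‖, ?_⟩ ⟨θ, hθ, rfl⟩
  rintro _ ⟨φ, -, rfl⟩
  refine (norm_tsum_le_tsum_norm (summable_symbol_terms ha φ).norm).trans_eq ?_
  simp only [norm_mul, norm_exp_I_mul_int_mul, mul_one]

lemma symbolSup_nonneg (ha : Summable fun k => ‖a k‖) : 0 ≤ symbolSup a :=
  (norm_nonneg _).trans
    (norm_symbol_le_symbolSup ha (θ := 0) ⟨by linarith [Real.pi_pos], Real.pi_pos.le⟩)

lemma hasSum_integral_symbol_mul (ha : Summable fun k => ‖a k‖) {P : ℝ → ℂ} (hP : Continuous P) :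
    HasSum (fun m : ℤ => a m * ∫ θ in -π..π, exp (I * m * θ) * P θ)
      (∫ θ in -π..π, symbol a θ * P θ) := by
  simp_rw [← intervalIntegral.integral_const_mul]
  refine intervalIntegral.hasSum_integral_of_dominated_convergence (fun m θ => ‖a m‖ * ‖P θ‖)
    (fun m => (by fun_prop : Continuous _).aestronglyMeasurable)
    (fun m => ae_of_all _ fun θ _ => ?_) (ae_of_all _ fun θ _ => ha.mul_right _) ?_
    (ae_of_all _ fun θ _ => ?_)
  · rw [norm_mul, norm_mul, norm_exp_I_mul_int_mul, one_mul]
  · simp_rw [tsum_mul_right]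
    exact (continuous_const.mul hP.norm).intervalIntegrable _ _
  · simpa only [symbol, mul_assoc] using (summable_symbol_terms ha θ).hasSum.mul_right (P θ)

lemma integral_symbol_mul_conj_trigPoly_mul_trigPoly (ha : Summable fun k => ‖a k‖)
    (x y : EuclideanSpace ℂ (Fin n)) :
    ∫ θ in -π..π, symbol a θ * (starRingEnd ℂ (trigPoly y θ) * trigPoly x θ)
      = 2 * π * inner ℂ y (Matrix.toEuclideanCLM (𝕜 := ℂ) (toeplitz a n) x) := by
  have h := hasSum_integral_symbol_mul ha
    (P := fun θ => starRingEnd ℂ (trigPoly y θ) * trigPoly x θ)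
    (by have := continuous_trigPoly x; have := continuous_trigPoly y; fun_prop)
  simp only [integral_exp_mul_conj_trigPoly_mul_trigPoly, Finset.mul_sum] at h
  refine h.unique ?_
  rw [Matrix.inner_toEuclideanCLM_eq_sum, Finset.mul_sum]
  refine hasSum_sum fun j _ => ?_
  rw [Finset.mul_sum]
  refine hasSum_sum fun k _ => ?_
  change HasSum _ (2 * π * (starRingEnd ℂ (y j) * a (j - k) * x k))
  convert hasSum_ite_eq' ((j : ℤ) - k) (2 * π * (starRingEnd ℂ (y j) * a (j - k) * x k))
    using 2 with m
  split_ifs with hm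
  · subst hm
    ring
  · simp

lemma two_mul_norm_inner_toeplitz_le (ha : Summable fun k => ‖a k‖)
    (x y : EuclideanSpace ℂ (Fin n)) :
    2 * ‖inner ℂ y (Matrix.toEuclideanCLM (𝕜 := ℂ) (toeplitz a n) x)‖
      ≤ symbolSup a * (‖y‖ ^ 2 + ‖x‖ ^ 2) := by
  have hgx := continuous_trigPoly x
  have hgy := continuous_trigPoly y
  refine le_of_mul_le_mul_left ?_ Real.pi_pos
  calc π * (2 * ‖inner ℂ y (Matrix.toEuclideanCLM (𝕜 := ℂ) (toeplitz a n) x)‖)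
      = ‖∫ θ in -π..π, symbol a θ * (starRingEnd ℂ (trigPoly y θ) * trigPoly x θ)‖ := by
        rw [integral_symbol_mul_conj_trigPoly_mul_trigPoly ha, norm_mul,
          show (2 * π : ℂ) = ((2 * π : ℝ) : ℂ) by push_cast; rfl, norm_real,
          Real.norm_of_nonneg (by positivity)]
        ring
    _ ≤ ∫ θ in -π..π, symbolSup a * (‖trigPoly y θ‖ * ‖trigPoly x θ‖) := by
        refine intervalIntegral.norm_integral_le_of_norm_le (by linarith [Real.pi_pos])
          (ae_of_all _ fun θ hθ => ?_) ((by fun_prop : Continuous _).intervalIntegrable _ _)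
        rw [norm_mul, norm_mul, RCLike.norm_conj]
        exact mul_le_mul_of_nonneg_right (norm_symbol_le_symbolSup ha ⟨hθ.1.le, hθ.2⟩)
          (by positivity)
    _ = symbolSup a * ∫ θ in -π..π, ‖trigPoly y θ‖ * ‖trigPoly x θ‖ :=
        intervalIntegral.integral_const_mul _ _
    _ ≤ symbolSup a * (π * (‖y‖ ^ 2 + ‖x‖ ^ 2)) :=
        mul_le_mul_of_nonneg_left (integral_norm_trigPoly_mul_norm_trigPoly_le x y)
          (symbolSup_nonneg ha)
    _ = π * (symbolSup a * (‖y‖ ^ 2 + ‖x‖ ^ 2)) := by ring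

end Symbol

end Toeplitz

open Toeplitz in
theorem stmt10 (a : ℤ → ℂ) (ha : Summable fun k : ℤ => ‖a k‖) :
    ∀ n : ℕ, 1 ≤ n → toeplitzNorm a n ≤ symbolSup a := by
  intro n _
  refine ContinuousLinearMap.opNorm_le_of_re_inner_le (symbolSup_nonneg ha) fun x y hx hy => ?_
  have h := two_mul_norm_inner_toeplitz_le ha x y
  rw [hx, hy] at h
  calc RCLike.re (inner ℂ (Matrix.toEuclideanCLM (𝕜 := ℂ) (toeplitz a n) x) y)
      = RCLike.re (inner ℂ y (Matrix.toEuclideanCLM (𝕜 := ℂ) (toeplitz a n) x)) := by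
        rw [← inner_conj_symm, RCLike.conj_re]
    _ ≤ ‖inner ℂ y (Matrix.toEuclideanCLM (𝕜 := ℂ) (toeplitz a n) x)‖ := RCLike.re_le_norm _
    _ ≤ symbolSup a := by linarith
end

section
/- Let a₀, a₁ ≥ 0 be real numbers and let n ≥ 1. Let T_n be the n×n lower bidiagonal Toeplitz matrix with diagonal entries a₀ and first subdiagonal entries a₁ (i.e., the Toeplitz matrix of the sequence a with a_0 = a₀, a_1 = a₁, and a_k = 0 otherwise). Then ‖T_n‖² ≤ a₀² + a₁² + 2·a₀·a₁·cos(π/(n+1)). -/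
/-!
Passing to the adjoint, whose rows read `a₀ x_j + a₁ x_{j+1}`, and writing `s_j = ‖x_j‖`
(extended by `s_n = 0`), one gets
`‖T* x‖² ≤ ∑ (a₀ s_j + a₁ s_{j+1})² ≤ a₀² ∑ s_j² + a₁² ∑ s_j² + 2 a₀ a₁ ∑ s_j s_{j+1}`,
so everything reduces to `∑ s_j s_{j+1} ≤ cos (π / (n + 1)) ∑ s_j²`, where `2 cos (π / (n + 1))`
is the top eigenvalue of the path on `n` vertices. That bound is a weighted AM-GM
`s_j s_{j+1} ≤ v_{j+2} / (2 v_{j+1}) s_j² + v_{j+1} / (2 v_{j+2}) s_{j+1}²` with the positive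
eigenvector `v_j = sin (j π / (n + 1))`: after summation the weights of `s_j²` add up to
`(v_j + v_{j+2}) / (2 v_{j+1}) = cos (π / (n + 1))`.
-/

open scoped Real

open Finset Real Matrix

theorem mul_le_div_mul_sq_add_div_mul_sq {p q : ℝ} (hp : 0 < p) (hq : 0 < q) (s t : ℝ) :
    s * t ≤ q / (2 * p) * s ^ 2 + p / (2 * q) * t ^ 2 := by
  have key : q / (2 * p) * s ^ 2 + p / (2 * q) * t ^ 2 - s * t =
      (q * s - p * t) ^ 2 / (2 * p * q) := by
    field_simp
    ring
  rw [← sub_nonneg, key]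
  positivity

theorem sum_mul_succ_le_of_weight {n : ℕ} {c : ℝ} {v s : ℕ → ℝ} (hv₀ : v 0 = 0)
    (hv_pos : ∀ j < n, 0 < v (j + 1)) (hv_last : 0 ≤ v (n + 1))
    (hv_rec : ∀ j < n, v j + v (j + 2) ≤ 2 * c * v (j + 1)) (hs : s n = 0) :
    ∑ j ∈ range n, s j * s (j + 1) ≤ c * ∑ j ∈ range n, s j ^ 2 := by
  set α : ℕ → ℝ := fun j => v (j + 2) / (2 * v (j + 1))
  set β : ℕ → ℝ := fun j => v j / (2 * v (j + 1))
  have termwise : ∀ j ∈ range n,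
      s j * s (j + 1) ≤ α j * s j ^ 2 + β (j + 1) * s (j + 1) ^ 2 := by
    intro j hj
    rw [mem_range] at hj
    rcases Nat.lt_or_ge (j + 1) n with hj' | hj'
    · exact mul_le_div_mul_sq_add_div_mul_sq (hv_pos j hj) (hv_pos (j + 1) hj') _ _
    · obtain rfl : n = j + 1 := by omega
      have hα : 0 ≤ α j := div_nonneg hv_last (by linarith [hv_pos j hj])
      simp only [hs, mul_zero, zero_pow two_ne_zero, add_zero]
      exact mul_nonneg hα (sq_nonneg _)
  have shift : ∑ j ∈ range n, β (j + 1) * s (j + 1) ^ 2 = ∑ j ∈ range n, β j * s j ^ 2 := by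
    have h := sum_range_succ' (fun j => β j * s j ^ 2) n
    rw [sum_range_succ] at h
    simpa [β, hv₀, hs] using h.symm
  have weight : ∀ j ∈ range n, α j + β j ≤ c := by
    intro j hj
    have hv := hv_pos j (mem_range.1 hj)
    rw [← add_div, div_le_iff₀ (by positivity)]
    linarith [hv_rec j (mem_range.1 hj)]
  calc ∑ j ∈ range n, s j * s (j + 1)
      ≤ ∑ j ∈ range n, (α j * s j ^ 2 + β (j + 1) * s (j + 1) ^ 2) := sum_le_sum termwise
    _ = ∑ j ∈ range n, (α j + β j) * s j ^ 2 := by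
      rw [sum_add_distrib, shift, ← sum_add_distrib]
      simp only [add_mul]
    _ ≤ ∑ j ∈ range n, c * s j ^ 2 :=
      sum_le_sum fun j hj => mul_le_mul_of_nonneg_right (weight j hj) (sq_nonneg _)
    _ = c * ∑ j ∈ range n, s j ^ 2 := (mul_sum ..).symm

theorem sin_sub_add_sin_add (x θ : ℝ) : sin (x - θ) + sin (x + θ) = 2 * cos θ * sin x := by
  rw [sin_sub, sin_add]
  ring

theorem sum_mul_succ_le_cos_mul_sum_sq {n : ℕ} {s : ℕ → ℝ} (hs : s n = 0) :
    ∑ j ∈ range n, s j * s (j + 1) ≤ cos (π / (n + 1)) * ∑ j ∈ range n, s j ^ 2 := by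
  set θ := π / (n + 1)
  have hθ : (n + 1) * θ = π := by simp only [θ]; field_simp
  refine sum_mul_succ_le_of_weight (v := fun j => sin (j * θ)) (by simp) (fun j hj => ?_) ?_
    (fun j _ => ?_) hs
  · apply sin_pos_of_pos_of_lt_pi (by positivity)
    rw [← hθ]
    gcongr
    norm_cast
    omega
  · simp [hθ]
  · refine le_of_eq ?_
    rw [← sin_sub_add_sin_add]
    push_cast
    ring_nf

theorem sum_sq_add_mul_succ_le {n : ℕ} {a₀ a₁ : ℝ} (ha : 0 ≤ a₀ * a₁) {s : ℕ → ℝ}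
    (hs : s n = 0) :
    ∑ j ∈ range n, (a₀ * s j + a₁ * s (j + 1)) ^ 2 ≤
      (a₀ ^ 2 + a₁ ^ 2 + 2 * a₀ * a₁ * cos (π / (n + 1))) * ∑ j ∈ range n, s j ^ 2 := by
  have expand : ∑ j ∈ range n, (a₀ * s j + a₁ * s (j + 1)) ^ 2 =
      a₀ ^ 2 * ∑ j ∈ range n, s j ^ 2 + a₁ ^ 2 * ∑ j ∈ range n, s (j + 1) ^ 2 +
        2 * a₀ * a₁ * ∑ j ∈ range n, s j * s (j + 1) := by
    simp only [mul_sum, ← sum_add_distrib]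
    exact sum_congr rfl fun j _ => by ring
  have shift : ∑ j ∈ range n, s (j + 1) ^ 2 ≤ ∑ j ∈ range n, s j ^ 2 := by
    have h := sum_range_succ' (fun j => s j ^ 2) n
    rw [sum_range_succ, hs] at h
    linarith [sq_nonneg (s 0)]
  have cross := mul_le_mul_of_nonneg_left (sum_mul_succ_le_cos_mul_sum_sq hs)
    (mul_nonneg zero_le_two ha)
  rw [expand]
  linarith [mul_le_mul_of_nonneg_left shift (sq_nonneg a₁)]

theorem ContinuousLinearMap.opNorm_sq_le_bound {𝕜 E F : Type*} [NontriviallyNormedField 𝕜]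
    [SeminormedAddCommGroup E] [SeminormedAddCommGroup F] [NormedSpace 𝕜 E] [NormedSpace 𝕜 F]
    (f : E →L[𝕜] F) {C : ℝ} (hC : 0 ≤ C) (h : ∀ x, ‖f x‖ ^ 2 ≤ C * ‖x‖ ^ 2) : ‖f‖ ^ 2 ≤ C := by
  have hf : ‖f‖ ≤ √C := f.opNorm_le_bound (sqrt_nonneg C) fun x => by
    simpa [sqrt_mul hC, sqrt_sq (norm_nonneg _)] using sqrt_le_sqrt (h x)
  exact (pow_le_pow_left₀ (norm_nonneg f) hf 2).trans_eq (sq_sqrt hC)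

theorem toeplitzNorm_eq_norm_conjTranspose (a : ℤ → ℂ) (n : ℕ) :
    toeplitzNorm a n = ‖toEuclideanCLM (𝕜 := ℂ) (toeplitz a n)ᴴ‖ := by
  rw [toeplitzNorm, ← star_eq_conjTranspose, map_star, ContinuousLinearMap.star_eq_adjoint,
    LinearIsometryEquiv.norm_map]

def bidiagonalSeq (a₀ a₁ : ℂ) : ℤ → ℂ :=
  fun k => if k = 0 then a₀ else if k = 1 then a₁ else 0

theorem conjTranspose_toeplitz_bidiagonalSeq_mulVec {n : ℕ} (a₀ a₁ : ℂ) (x : Fin n → ℂ)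
    (j : Fin n) :
    ((toeplitz (bidiagonalSeq a₀ a₁) n)ᴴ *ᵥ x) j =
      star a₀ * x j + star a₁ * Function.extend Fin.val x 0 (j + 1) := by
  set X := Function.extend Fin.val x 0
  have hX : ∀ k : Fin n, x k = X k := fun k => (Fin.val_injective.extend_apply x 0 k).symm
  simp only [mulVec, dotProduct, conjTranspose_apply, toeplitz, hX]
  rw [Fin.sum_univ_eq_sum_range (fun k => star (bidiagonalSeq a₀ a₁ (k - j)) * X k) n,
    sum_eq_add (j : ℕ) (j + 1) (by omega)]
  · simp [bidiagonalSeq]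
  · intro k _ hk
    have h0 : (k : ℤ) - j ≠ 0 := by omega
    have h1 : (k : ℤ) - j ≠ 1 := by omega
    simp [bidiagonalSeq, h0, h1]
  · intro hj
    exact absurd (mem_range.2 j.isLt) hj
  · intro hj
    have hX : X (j + 1) = 0 :=
      Function.extend_apply' _ _ _ fun ⟨k, hk⟩ => hj (mem_range.2 (hk ▸ k.isLt))
    rw [hX, mul_zero]

theorem norm_sq_toEuclideanCLM_conjTranspose_toeplitz_bidiagonalSeq_le {a₀ a₁ : ℝ} (h₀ : 0 ≤ a₀)
    (h₁ : 0 ≤ a₁) {n : ℕ} (x : EuclideanSpace ℂ (Fin n)) :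
    ‖toEuclideanCLM (𝕜 := ℂ) (toeplitz (bidiagonalSeq a₀ a₁) n)ᴴ x‖ ^ 2 ≤
      (a₀ ^ 2 + a₁ ^ 2 + 2 * a₀ * a₁ * cos (π / (n + 1))) * ‖x‖ ^ 2 := by
  set s : ℕ → ℝ := fun k => ‖Function.extend Fin.val x.ofLp 0 k‖
  have hs : s n = 0 := by
    simp only [s]
    rw [Function.extend_apply' _ _ _ fun ⟨k, hk⟩ => k.isLt.ne hk, Pi.zero_apply, norm_zero]
  have hx : ∀ j : Fin n, ‖x j‖ = s j := fun j => by
    simp only [s, Fin.val_injective.extend_apply]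
  have entry : ∀ j : Fin n,
      ‖(toEuclideanCLM (𝕜 := ℂ) (toeplitz (bidiagonalSeq a₀ a₁) n)ᴴ x) j‖ ≤
        a₀ * s j + a₁ * s (j + 1) := fun j => by
    rw [ofLp_toEuclideanCLM, conjTranspose_toeplitz_bidiagonalSeq_mulVec]
    refine (norm_add_le _ _).trans_eq ?_
    simp [hx, s, abs_of_nonneg h₀, abs_of_nonneg h₁]
  rw [EuclideanSpace.norm_sq_eq, EuclideanSpace.norm_sq_eq]
  calc ∑ j, ‖(toEuclideanCLM (𝕜 := ℂ) (toeplitz (bidiagonalSeq a₀ a₁) n)ᴴ x) j‖ ^ 2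
      ≤ ∑ j : Fin n, (a₀ * s j + a₁ * s (j + 1)) ^ 2 :=
        sum_le_sum fun j _ => pow_le_pow_left₀ (norm_nonneg _) (entry j) 2
    _ = ∑ j ∈ range n, (a₀ * s j + a₁ * s (j + 1)) ^ 2 :=
        Fin.sum_univ_eq_sum_range (fun j => (a₀ * s j + a₁ * s (j + 1)) ^ 2) n
    _ ≤ (a₀ ^ 2 + a₁ ^ 2 + 2 * a₀ * a₁ * cos (π / (n + 1))) * ∑ j ∈ range n, s j ^ 2 :=
        sum_sq_add_mul_succ_le (mul_nonneg h₀ h₁) hs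
    _ = (a₀ ^ 2 + a₁ ^ 2 + 2 * a₀ * a₁ * cos (π / (n + 1))) * ∑ j, ‖x j‖ ^ 2 := by
        simp only [hx, Fin.sum_univ_eq_sum_range (fun j => s j ^ 2)]

theorem stmt12_general (a₀ a₁ : ℝ) (h₀ : 0 ≤ a₀) (h₁ : 0 ≤ a₁) (n : ℕ) :
    toeplitzNorm (fun k : ℤ => if k = 0 then (a₀ : ℂ) else if k = 1 then (a₁ : ℂ) else 0) n ^ 2 ≤
      a₀ ^ 2 + a₁ ^ 2 + 2 * a₀ * a₁ * Real.cos (π / (n + 1)) := by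
  have hC : 0 ≤ a₀ ^ 2 + a₁ ^ 2 + 2 * a₀ * a₁ * cos (π / (n + 1)) := by
    nlinarith [neg_one_le_cos (π / (n + 1)), mul_nonneg h₀ h₁, sq_nonneg (a₀ - a₁)]
  change toeplitzNorm (bidiagonalSeq a₀ a₁) n ^ 2 ≤ _
  rw [toeplitzNorm_eq_norm_conjTranspose]
  exact ContinuousLinearMap.opNorm_sq_le_bound _ hC
    (norm_sq_toEuclideanCLM_conjTranspose_toeplitz_bidiagonalSeq_le h₀ h₁)

theorem stmt12 (a₀ a₁ : ℝ) (h₀ : 0 ≤ a₀) (h₁ : 0 ≤ a₁) (n : ℕ) (hn : 1 ≤ n) :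
    toeplitzNorm (fun k : ℤ => if k = 0 then (a₀ : ℂ) else if k = 1 then (a₁ : ℂ) else 0) n ^ 2 ≤
      a₀ ^ 2 + a₁ ^ 2 + 2 * a₀ * a₁ * Real.cos (π / (n + 1)) :=
  stmt12_general a₀ a₁ h₀ h₁ n
end

section
/- Let ρ ∈ (0,1), C > 0 and D > 0, and let G(z) := C/(z − ρ) + D. Define h : ℝ → ℝ by h(θ) := |G(e^{iθ})|². Then h is twice differentiable at θ = 0 and h''(0) = −(2·D·C·(1−ρ²) + 2·C²·ρ)/(1−ρ)⁴. Consequently, the smoothness constant of Lemma on quadratic decay of the squared symbol, L = (DC(1−ρ²)+C²ρ)/(1−ρ)⁴, cannot be improved in general. -/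
/-!
On the unit circle `|e^{iθ} - ρ|² = ρ² + 1 - 2ρ cos θ` and
`|C + D(e^{iθ} - ρ)|² = (C - Dρ)² + D² + 2(C - Dρ)D cos θ`, so `h = f ∘ cos` for a
linear-fractional `f`. Since `cos' 0 = 0` and `cos'' 0 = -1`, `h''(0) = -f'(1)`, and `f'(1)`
is computed explicitly.
-/

open scoped Real
open Filter Topology

open Complex in
theorem Complex.sq_norm_ofReal_add_ofReal_mul_exp (a b θ : ℝ) :
    ‖(a : ℂ) + b * exp (I * θ)‖ ^ 2 = a ^ 2 + b ^ 2 + 2 * a * b * Real.cos θ := by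
  rw [mul_comm I, Complex.sq_norm, normSq_apply]
  simp only [add_re, add_im, mul_re, mul_im, ofReal_re, ofReal_im, exp_ofReal_mul_I_re,
    exp_ofReal_mul_I_im]
  linear_combination b ^ 2 * Real.sin_sq_add_cos_sq θ

theorem sq_norm_div_exp_sub_add (ρ C D θ : ℝ) (hρ : |ρ| < 1) :
    ‖(C : ℂ) / (Complex.exp (Complex.I * θ) - ρ) + D‖ ^ 2 =
      ((C - D * ρ) ^ 2 + D ^ 2 + 2 * (C - D * ρ) * D * Real.cos θ) /
        (ρ ^ 2 + 1 - 2 * ρ * Real.cos θ) := by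
  have hden : ‖Complex.exp (Complex.I * θ) - ρ‖ ^ 2 = ρ ^ 2 + 1 - 2 * ρ * Real.cos θ := by
    have := Complex.sq_norm_ofReal_add_ofReal_mul_exp (-ρ) 1 θ
    rw [Complex.ofReal_neg, Complex.ofReal_one, one_mul, neg_add_eq_sub] at this
    linear_combination this
  have hnum : ‖(C : ℂ) + D * (Complex.exp (Complex.I * θ) - ρ)‖ ^ 2 =
      (C - D * ρ) ^ 2 + D ^ 2 + 2 * (C - D * ρ) * D * Real.cos θ := by
    rw [← Complex.sq_norm_ofReal_add_ofReal_mul_exp]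
    push_cast
    ring_nf
  have hne : Complex.exp (Complex.I * θ) - ρ ≠ 0 := by
    have hcos : ρ * Real.cos θ ≤ |ρ| :=
      calc ρ * Real.cos θ ≤ |ρ| * |Real.cos θ| := abs_mul ρ _ ▸ le_abs_self _
        _ ≤ |ρ| := mul_le_of_le_one_right (abs_nonneg ρ) (Real.abs_cos_le_one θ)
    have hpos : 0 < ‖Complex.exp (Complex.I * θ) - ρ‖ ^ 2 := by
      rw [hden]
      nlinarith [sq_abs ρ]
    exact fun h0 => by simp [h0] at hpos
  rw [div_add' _ _ _ hne, norm_div, div_pow, hnum, hden]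

theorem hasDerivAt_linear_div_linear (p q r s x : ℝ) (hx : r - s * x ≠ 0) :
    HasDerivAt (fun x => (p + q * x) / (r - s * x)) ((q * r + s * p) / (r - s * x) ^ 2) x := by
  have hnum : HasDerivAt (fun x => p + q * x) q x := by
    simpa using ((hasDerivAt_id x).const_mul q).const_add p
  have hden : HasDerivAt (fun x => r - s * x) (-s) x := by
    simpa using ((hasDerivAt_id x).const_mul s).const_sub r
  exact (hnum.div hden hx).congr_deriv (by ring)

theorem hasDerivAt_deriv_comp_cos_zero {f f' : ℝ → ℝ}
    (hf : ∀ᶠ x in 𝓝 1, HasDerivAt f (f' x) x) (hf' : DifferentiableAt ℝ f' 1) :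
    HasDerivAt (deriv (f ∘ Real.cos)) (-f' 1) 0 := by
  have hcos : Tendsto Real.cos (𝓝 0) (𝓝 1) := by
    simpa using Real.continuous_cos.tendsto 0
  have hderiv : deriv (f ∘ Real.cos) =ᶠ[𝓝 0] fun θ => -(f' (Real.cos θ) * Real.sin θ) := by
    filter_upwards [hcos.eventually hf] with θ hθ
    simpa using (hθ.comp θ (Real.hasDerivAt_cos θ)).deriv
  have hf'_cos : HasDerivAt (fun θ => f' (Real.cos θ)) (deriv f' 1 * -Real.sin 0) 0 := by
    rw [← Real.cos_zero] at hf' ⊢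
    exact hf'.hasDerivAt.comp 0 (Real.hasDerivAt_cos 0)
  refine ((hf'_cos.mul (Real.hasDerivAt_sin 0)).neg.congr_of_eventuallyEq hderiv).congr_deriv ?_
  simp

theorem stmt16_general (ρ C D : ℝ) (hρ : ρ ∈ Set.Ioo (0 : ℝ) 1)
    (h : ℝ → ℝ)
    (hdef : ∀ θ : ℝ,
      h θ = ‖(C : ℂ) / (Complex.exp (Complex.I * θ) - (ρ : ℂ)) + (D : ℂ)‖ ^ 2) :
    DifferentiableAt ℝ h 0 ∧ DifferentiableAt ℝ (deriv h) 0 ∧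
      deriv (deriv h) 0 = -(2 * D * C * (1 - ρ ^ 2) + 2 * C ^ 2 * ρ) / (1 - ρ) ^ 4 := by
  obtain ⟨hρ0, hρ1⟩ := hρ
  set p := (C - D * ρ) ^ 2 + D ^ 2
  set q := 2 * (C - D * ρ) * D
  set f := fun x : ℝ => (p + q * x) / (ρ ^ 2 + 1 - 2 * ρ * x)
  set f' := fun x : ℝ => (q * (ρ ^ 2 + 1) + 2 * ρ * p) / (ρ ^ 2 + 1 - 2 * ρ * x) ^ 2
  have hden : ρ ^ 2 + 1 - 2 * ρ * 1 ≠ 0 := by nlinarith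
  have hh : h = f ∘ Real.cos := funext fun θ =>
    (hdef θ).trans (sq_norm_div_exp_sub_add ρ C D θ (abs_lt.mpr ⟨by linarith, hρ1⟩))
  have hf : ∀ᶠ x in 𝓝 1, HasDerivAt f (f' x) x := by
    have hcont : ContinuousAt (fun x : ℝ => ρ ^ 2 + 1 - 2 * ρ * x) 1 := by fun_prop
    filter_upwards [hcont.eventually_ne hden] with x hx
    exact hasDerivAt_linear_div_linear _ _ _ _ x hx
  have hf' : DifferentiableAt ℝ f' 1 := by
    simp only [f']
    fun_prop (disch := exact pow_ne_zero 2 hden)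
  have h2 := hasDerivAt_deriv_comp_cos_zero hf hf'
  rw [hh]
  refine ⟨?_, h2.differentiableAt, ?_⟩
  · exact (Real.cos_zero ▸ hf.self_of_nhds).differentiableAt.comp 0 Real.differentiableAt_cos
  · have h1ρ : 1 - ρ ≠ 0 := by linarith
    rw [h2.deriv]
    simp only [f', p, q]
    rw [show ρ ^ 2 + 1 - 2 * ρ * 1 = (1 - ρ) ^ 2 by ring]
    field_simp
    ring

theorem stmt16 (ρ C D : ℝ) (hρ : ρ ∈ Set.Ioo (0 : ℝ) 1) (hC : 0 < C) (hD : 0 < D)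
    (h : ℝ → ℝ)
    (hdef : ∀ θ : ℝ,
      h θ = ‖(C : ℂ) / (Complex.exp (Complex.I * θ) - (ρ : ℂ)) + (D : ℂ)‖ ^ 2) :
    DifferentiableAt ℝ h 0 ∧ DifferentiableAt ℝ (deriv h) 0 ∧
      deriv (deriv h) 0 = -(2 * D * C * (1 - ρ ^ 2) + 2 * C ^ 2 * ρ) / (1 - ρ) ^ 4 :=
  stmt16_general ρ C D hρ h hdef
end
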